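/- With the SIC projectors P₁,…,P₄ as above, the maximally mixed state ρ = I/2 yields (ΔP₁, ΔP₂, ΔP₃, ΔP₄) = (1/4, 1/4, 1/4, 1/4), and this point is not attained by any pure qubit state; hence for this 4-tuple of observables the pure-state uncertainty region is a proper subset of the mixed-state uncertainty region. -/

import Mathlib

open Matrix Complex Real
open scoped ComplexOrder

noncomputable def σx : Matrix (Fin 2) (Fin 2) ℂ := !![0, 1; 1, 0]
noncomputable def σy : Matrix (Fin 2) (Fin 2) ℂ := !![0, -Complex.I; Complex.I, 0]
noncomputable def σz : Matrix (Fin 2) (Fin 2) ℂ := !![1, 0; 0, -1]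

/-- `r · σ` for `r ∈ ℝ³`. -/
noncomputable def pauliDot (r : ℝ × ℝ × ℝ) : Matrix (Fin 2) (Fin 2) ℂ :=
  (r.1 : ℂ) • σx + (r.2.1 : ℂ) • σy + (r.2.2 : ℂ) • σz

/-- `(I + r·σ)/2`. -/
noncomputable def bloch (r : ℝ × ℝ × ℝ) : Matrix (Fin 2) (Fin 2) ℂ :=
  (1/2 : ℂ) • (1 + pauliDot r)

def dot3 (r a : ℝ × ℝ × ℝ) : ℝ := r.1 * a.1 + r.2.1 * a.2.1 + r.2.2 * a.2.2

/-- Variance `Tr(A²ρ) - (Tr(Aρ))²` (real part, the quantities being real for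
Hermitian `A` and density `ρ`). -/
noncomputable def variance {n : Type*} [Fintype n] [DecidableEq n]
    (A ρ : Matrix n n ℂ) : ℝ :=
  ((A * A * ρ).trace).re - (((A * ρ).trace).re) ^ 2

/-- Variance of a projector: `Tr(Aρ) - (Tr(Aρ))²`. -/
noncomputable def pvar {n : Type*} [Fintype n] [DecidableEq n]
    (A ρ : Matrix n n ℂ) : ℝ :=
  ((A * ρ).trace).re - (((A * ρ).trace).re) ^ 2

/-- A density matrix: positive semidefinite with unit trace. -/
def IsDensity {n : Type*} [Fintype n] [DecidableEq n] (ρ : Matrix n n ℂ) : Prop :=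
  ρ.PosSemidef ∧ ρ.trace = 1

/-- Rank-one projector `|ψ⟩⟨ψ|` from a vector `ψ`. -/
noncomputable def outer {n : Type*} (ψ : n → ℂ) : Matrix n n ℂ :=
  Matrix.vecMulVec ψ (star ψ)

/-- The four tetrahedral SIC states in `ℂ²`. -/
noncomputable def sicState : Fin 4 → (Fin 2 → ℂ)
  | 0 => ![1, 0]
  | 1 => ![-(1 / Real.sqrt 3 : ℝ), (Real.sqrt (2/3) : ℝ)]
  | 2 => ![-(1 / Real.sqrt 3 : ℝ),
      Complex.exp (Complex.I * (2 * Real.pi / 3)) * (Real.sqrt (2/3) : ℝ)]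
  | 3 => ![-(1 / Real.sqrt 3 : ℝ),
      Complex.exp (-Complex.I * (2 * Real.pi / 3)) * (Real.sqrt (2/3) : ℝ)]

/-- The SIC projectors `P_k = |ψ_k⟩⟨ψ_k|`. -/
noncomputable def sicProj (k : Fin 4) : Matrix (Fin 2) (Fin 2) ℂ :=
  outer (sicState k)

lemma outer_posSemidef {n : Type*} [Fintype n] [DecidableEq n] (ψ : n → ℂ) :
    (outer ψ).PosSemidef := by
  have h : outer ψ = replicateCol Unit ψ * (replicateCol Unit ψ)ᴴ := by
    rw [conjTranspose_replicateCol, ← vecMulVec_eq]; rfl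
  rw [h]
  exact posSemidef_self_mul_conjTranspose _

lemma outer_trace {n : Type*} [Fintype n] [DecidableEq n] (ψ : n → ℂ)
    (h : (∑ i, ‖ψ i‖ ^ 2) = 1) : (outer ψ).trace = 1 := by
  simp only [outer, Matrix.trace, Matrix.diag, vecMulVec_apply, Pi.star_apply,
    RCLike.star_def, Complex.mul_conj]
  rw [← Complex.ofReal_sum]
  norm_cast
  rw [← h]
  congr 1; ext i
  rw [Complex.normSq_eq_norm_sq]

lemma trace_outer_mul_outer {n : Type*} [Fintype n] [DecidableEq n] (φ ψ : n → ℂ) :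
    ((outer φ * outer ψ).trace).re
      = Complex.normSq (∑ i, (starRingEnd ℂ) (φ i) * ψ i) := by
  have : (outer φ * outer ψ).trace
      = (∑ i, (starRingEnd ℂ) (φ i) * ψ i) * (starRingEnd ℂ) (∑ i, (starRingEnd ℂ) (φ i) * ψ i) := by
    simp [outer, Matrix.trace, Matrix.diag, Matrix.mul_apply, vecMulVec_apply,
      Pi.star_apply, Finset.sum_mul, Finset.mul_sum, map_sum]
    congr 1; ext i; congr 1; ext j; ring
  rw [this, Complex.mul_conj]
  simp

lemma he : Complex.exp (Complex.I * (2 * Real.pi / 3))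
    = Complex.ofReal (-(1/2)) + Complex.ofReal (Real.sqrt 3 / 2) * Complex.I := by
  have h : Complex.I * (2 * (Real.pi:ℂ) / 3) = ((2 * π / 3 : ℝ) : ℂ) * Complex.I := by
    push_cast; ring
  have c23 : Real.cos (2 * π / 3) = -(1/2) := by
    have : (2 * π / 3 : ℝ) = π - π/3 := by ring
    rw [this, Real.cos_pi_sub, Real.cos_pi_div_three]
  have s23 : Real.sin (2 * π / 3) = Real.sqrt 3 / 2 := by
    have : (2 * π / 3 : ℝ) = π - π/3 := by ring
    rw [this, Real.sin_pi_sub, Real.sin_pi_div_three]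
  apply Complex.ext
  · rw [h, Complex.exp_ofReal_mul_I_re, c23]; simp
  · rw [h, Complex.exp_ofReal_mul_I_im, s23]; simp

lemma he' : Complex.exp (-Complex.I * (2 * Real.pi / 3))
    = Complex.ofReal (-(1/2)) - Complex.ofReal (Real.sqrt 3 / 2) * Complex.I := by
  have h : -Complex.I * (2 * (Real.pi:ℂ) / 3) = ((-(2 * π / 3) : ℝ) : ℂ) * Complex.I := by
    push_cast; ring
  have c23 : Real.cos (2 * π / 3) = -(1/2) := by
    have : (2 * π / 3 : ℝ) = π - π/3 := by ring
    rw [this, Real.cos_pi_sub, Real.cos_pi_div_three]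
  have s23 : Real.sin (2 * π / 3) = Real.sqrt 3 / 2 := by
    have : (2 * π / 3 : ℝ) = π - π/3 := by ring
    rw [this, Real.sin_pi_sub, Real.sin_pi_div_three]
  apply Complex.ext
  · rw [h, Complex.exp_ofReal_mul_I_re, Real.cos_neg, c23]; simp
  · rw [h, Complex.exp_ofReal_mul_I_im, Real.sin_neg, s23]; simp

lemma normSq_e : Complex.normSq (Complex.exp (Complex.I * (2 * Real.pi / 3))) = 1 := by
  rw [he]
  have h3 : Real.sqrt 3 ^ 2 = 3 := Real.sq_sqrt (by norm_num)
  simp [Complex.normSq_apply, Complex.add_re, Complex.add_im, Complex.mul_re, Complex.mul_im,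
    Complex.ofReal_re, Complex.ofReal_im, Complex.I_re, Complex.I_im]
  nlinarith [h3]

lemma normSq_e' : Complex.normSq (Complex.exp (-Complex.I * (2 * Real.pi / 3))) = 1 := by
  rw [he']
  have h3 : Real.sqrt 3 ^ 2 = 3 := Real.sq_sqrt (by norm_num)
  simp [Complex.normSq_apply, Complex.sub_re, Complex.sub_im, Complex.mul_re, Complex.mul_im,
    Complex.ofReal_re, Complex.ofReal_im, Complex.I_re, Complex.I_im]
  nlinarith [h3]

lemma sic_norm (k : Fin 4) : (∑ i, ‖sicState k i‖ ^ 2) = 1 := by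
  have h3 : Real.sqrt 3 ^ 2 = 3 := Real.sq_sqrt (by norm_num)
  have h23 : Real.sqrt (2/3) ^ 2 = 2/3 := Real.sq_sqrt (by norm_num)
  have hp : ((1:ℝ) / Real.sqrt 3) ^ 2 = 1/3 := by rw [div_pow, one_pow, h3]
  fin_cases k <;>
  · simp only [sicState, Fin.sum_univ_two, Matrix.cons_val_zero, Matrix.cons_val_one,
      Matrix.head_cons, Complex.sq_norm, Complex.normSq_mul,
      Complex.normSq_ofReal, Complex.normSq_one, Complex.normSq_zero, normSq_e, normSq_e']
    have hq : Real.sqrt 2 / Real.sqrt 3 * (Real.sqrt 2 / Real.sqrt 3) = 2/3 := by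
      rw [div_mul_div_comm, Real.mul_self_sqrt (by norm_num : (0:ℝ) ≤ 2),
        Real.mul_self_sqrt (by norm_num : (0:ℝ) ≤ 3)]
    norm_num
    all_goals linarith [hq]

set_option maxHeartbeats 1000000 in
lemma no_pure (ψ : Fin 2 → ℂ) (hn : (∑ i, ‖ψ i‖ ^ 2) = 1)
    (h0 : Complex.normSq (∑ i, (starRingEnd ℂ) (sicState 0 i) * ψ i) = 1/2)
    (h1 : Complex.normSq (∑ i, (starRingEnd ℂ) (sicState 1 i) * ψ i) = 1/2)
    (h2 : Complex.normSq (∑ i, (starRingEnd ℂ) (sicState 2 i) * ψ i) = 1/2) : False := by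
  have h3 : Real.sqrt 3 ^ 2 = 3 := Real.sq_sqrt (by norm_num)
  have h3pos : (0:ℝ) < Real.sqrt 3 := Real.sqrt_pos.mpr (by norm_num)
  have hq2 : Real.sqrt (2/3) ^ 2 = 2/3 := Real.sq_sqrt (by norm_num)
  have hqpos : (0:ℝ) < Real.sqrt (2/3) := Real.sqrt_pos.mpr (by norm_num)
  simp only [sicState, Fin.sum_univ_two, Matrix.cons_val_zero, Matrix.cons_val_one,
    Matrix.head_cons, he, Complex.sq_norm, Complex.normSq_apply,
    _root_.map_one, _root_.map_zero, _root_.map_mul, _root_.map_add, Complex.conj_ofReal,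
    map_neg, Complex.conj_I, one_mul, zero_mul, add_zero] at h0 h1 h2 hn
  simp only [Complex.add_re, Complex.add_im, Complex.sub_re, Complex.sub_im, Complex.mul_re,
    Complex.mul_im, Complex.neg_re, Complex.neg_im, Complex.ofReal_re, Complex.ofReal_im,
    Complex.I_re, Complex.I_im] at h0 h1 h2
  rw [show (1:ℝ)/Real.sqrt 3 = Real.sqrt 3 / 3 from (Real.sqrt_div_self' (x := 3)).symm] at h1 h2
  set ar := (ψ 0).re; set ai := (ψ 0).im; set br := (ψ 1).re; set bi := (ψ 1).im
  set r := Real.sqrt 3 with hrdef; set q := Real.sqrt (2/3) with hqdef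
  have hb : br^2 + bi^2 = 1/2 := by linear_combination hn - h0
  have hX : ar*br + ai*bi = 0 := by
    have key : q*r*(ar*br + ai*bi) = 0 := by
      linear_combination (-(3:ℝ)/2)*h1 + (r^2/6)*h0 + (3*q^2/2)*hb + (1/12)*h3 + (3/4)*hq2
    rcases mul_eq_zero.mp key with h' | h'
    · exact absurd h' (by positivity)
    · exact h'
  have hY : ar*bi - ai*br = 0 := by
    have key : q*(ar*bi - ai*br) = 0 := by
      linear_combination (-(1:ℝ))*h2 + (r^2/9)*h0 + (q^2/4*(1+r^2))*hb + (q*r/3)*hX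
        + (1/18 + q^2/8 - q*(ar*bi - ai*br)/3)*h3 + (1/2)*hq2
    rcases mul_eq_zero.mp key with h' | h'
    · exact absurd h' (by positivity)
    · exact h'
  have final : (0:ℝ) = 1/4 := by
    linear_combination (br^2+bi^2)*h0 + (1/2)*hb - (ar*br+ai*bi)*hX - (ar*bi-ai*br)*hY
  norm_num at final


lemma pvar_half (k : Fin 4) :
    pvar (sicProj k) ((1/2 : ℂ) • (1 : Matrix (Fin 2) (Fin 2) ℂ)) = 1 / 4 := by
  have ht : ((sicProj k * ((1/2 : ℂ) • 1)).trace) = 1/2 := by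
    rw [Matrix.mul_smul, Matrix.mul_one, Matrix.trace_smul]
    rw [show sicProj k = outer (sicState k) from rfl, outer_trace _ (sic_norm k)]
    simp
  unfold pvar
  rw [ht]
  norm_num

lemma not_pure_mem : (fun _ : Fin 4 => (1/4 : ℝ)) ∉
    {v : Fin 4 → ℝ | ∃ ψ : Fin 2 → ℂ, (∑ i, ‖ψ i‖ ^ 2) = 1 ∧
      ∀ k, v k = pvar (sicProj k) (outer ψ)} := by
  rintro ⟨ψ, hψ, hv⟩
  have key : ∀ k : Fin 4,
      Complex.normSq (∑ i, (starRingEnd ℂ) (sicState k i) * ψ i) = 1/2 := by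
    intro k
    have h := hv k
    have ht := trace_outer_mul_outer (sicState k) ψ
    unfold pvar at h
    rw [show sicProj k = outer (sicState k) from rfl] at h
    rw [ht] at h
    nlinarith [sq_nonneg (Complex.normSq (∑ i, (starRingEnd ℂ) (sicState k i) * ψ i) - 1/2)]
  exact no_pure ψ hψ (key 0) (key 1) (key 2)

lemma halfId_density : IsDensity ((1/2 : ℂ) • (1 : Matrix (Fin 2) (Fin 2) ℂ)) := by
  constructor
  · have hB : (1/2 : ℂ) • (1 : Matrix (Fin 2) (Fin 2) ℂ)
        = (((Real.sqrt (1/2) : ℝ) : ℂ) • (1 : Matrix (Fin 2) (Fin 2) ℂ))ᴴ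
          * (((Real.sqrt (1/2) : ℝ) : ℂ) • (1 : Matrix (Fin 2) (Fin 2) ℂ)) := by
      rw [conjTranspose_smul, conjTranspose_one, Matrix.smul_mul, Matrix.mul_smul,
        Matrix.one_mul, smul_smul]
      congr 1
      rw [RCLike.star_def, Complex.conj_ofReal, ← Complex.ofReal_mul,
        Real.mul_self_sqrt (by norm_num : (0:ℝ) ≤ 1/2)]
      norm_num
    rw [hB]
    exact posSemidef_conjTranspose_mul_self _
  · simp [Matrix.trace_smul, Matrix.trace_one]

/-- the maximally mixed state gives `(ΔP₁,…,ΔP₄) = (1/4,…,1/4)`; this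
point is not attained by any pure state, so the pure-state uncertainty region of
the four SIC projectors is a proper subset of the mixed-state one. -/
theorem sic_pure_region_proper_subset :
    (∀ k : Fin 4,
      pvar (sicProj k) ((1/2 : ℂ) • (1 : Matrix (Fin 2) (Fin 2) ℂ)) = 1 / 4) ∧
    (fun _ : Fin 4 => (1/4 : ℝ)) ∉
      {v : Fin 4 → ℝ | ∃ ψ : Fin 2 → ℂ, (∑ i, ‖ψ i‖ ^ 2) = 1 ∧
        ∀ k, v k = pvar (sicProj k) (outer ψ)} ∧
    {v : Fin 4 → ℝ | ∃ ψ : Fin 2 → ℂ, (∑ i, ‖ψ i‖ ^ 2) = 1 ∧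
        ∀ k, v k = pvar (sicProj k) (outer ψ)} ⊂
      {v : Fin 4 → ℝ | ∃ ρ : Matrix (Fin 2) (Fin 2) ℂ, IsDensity ρ ∧
        ∀ k, v k = pvar (sicProj k) ρ} := by
  refine ⟨pvar_half, not_pure_mem, ?_, ?_⟩
  · rintro v ⟨ψ, hψ, hv⟩
    exact ⟨outer ψ, ⟨outer_posSemidef ψ, outer_trace ψ hψ⟩, hv⟩
  · intro hsub
    exact not_pure_mem (hsub ⟨(1/2 : ℂ) • 1, halfId_density, fun k => (pvar_half k).symm⟩)
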